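/- arXiv:2601.03817 — 3 statements merged into one kernel-verified Lean document; each statement's English description precedes it below -/
import Mathlib

section
/- For unit vectors e_x = cos(μ_x/2)·v₀ + sin(μ_x/2)·v₁ in a Hilbert space with orthonormal v₀, v₁, where μ_x = (x − (X−1)/2)·θ for x = 0,…,X−1, the sum of pairwise overlaps satisfies Σ_{x,x'=0}^{X−1} |⟨e_x, e_{x'}⟩|² = (1/2)(X² + (sin(Xθ/2)/sin(θ/2))²) for θ ∈ (0, π/X). -/
open Real

/-!
With `e_x = cos(μ_x/2) v₀ + sin(μ_x/2) v₁` one has `⟪e_x, e_x'⟫ = cos((μ_x - μ_x')/2)`, so each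
overlap is `(1 + cos((x - x')θ))/2`. The double sum of `cos((x - x')θ)` is `|∑ₓ e^{ixθ}|²`, and
the geometric sum has modulus `|sin(Xθ/2)/sin(θ/2)|`.
-/

open Complex in
theorem sum_sum_cos_sub_eq_norm_sum_exp_sq {ι : Type*} (s : Finset ι) (t : ι → ℝ) :
    ∑ j ∈ s, ∑ k ∈ s, Real.cos (t j - t k) = ‖∑ k ∈ s, exp (t k * I)‖ ^ 2 := by
  have hsq : ((‖∑ k ∈ s, exp (t k * I)‖ ^ 2 : ℝ) : ℂ)
      = ∑ j ∈ s, ∑ k ∈ s, exp ((t j - t k : ℝ) * I) := by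
    push_cast
    rw [← mul_conj', map_sum, Finset.sum_mul_sum]
    refine Finset.sum_congr rfl fun j _ => Finset.sum_congr rfl fun k _ => ?_
    rw [← exp_conj, ← Complex.exp_add, map_mul, conj_I, conj_ofReal]
    ring_nf
  simpa only [ofReal_re, re_sum, exp_ofReal_mul_I_re] using (congrArg re hsq).symm

open Complex in
theorem norm_sum_range_exp_mul_I {θ : ℝ} (hθ : Real.sin (θ / 2) ≠ 0) (n : ℕ) :
    ‖∑ k ∈ Finset.range n, exp ((k * θ : ℝ) * I)‖ = |Real.sin (n * θ / 2) / Real.sin (θ / 2)| := by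
  have hpow : ∀ k : ℕ, exp ((k * θ : ℝ) * I) = exp (θ * I) ^ k := fun k => by
    rw [← Complex.exp_nat_mul]; push_cast; ring_nf
  have hne : exp (θ * I) ≠ 1 := fun h => by
    have := norm_exp_I_mul_ofReal_sub_one θ
    rw [mul_comm, h, sub_self, norm_zero, norm_mul, norm_two] at this
    exact hθ (norm_eq_zero.mp (by linarith))
  simp_rw [hpow]
  rw [geom_sum_eq hne, norm_div, ← hpow, mul_comm _ I, mul_comm _ I,
    norm_exp_I_mul_ofReal_sub_one, norm_exp_I_mul_ofReal_sub_one, norm_mul, norm_mul,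
    mul_div_mul_left _ _ (by norm_num),
    ← norm_div, Real.norm_eq_abs]

theorem inner_cos_smul_add_sin_smul {𝕜 E : Type*} [RCLike 𝕜] [NormedAddCommGroup E]
    [InnerProductSpace 𝕜 E] {v₀ v₁ : E} (h₀ : ‖v₀‖ = 1) (h₁ : ‖v₁‖ = 1)
    (horth : inner 𝕜 v₀ v₁ = 0) (a b : ℝ) :
    inner 𝕜 ((Real.cos a : 𝕜) • v₀ + (Real.sin a : 𝕜) • v₁)
      ((Real.cos b : 𝕜) • v₀ + (Real.sin b : 𝕜) • v₁) = (Real.cos (a - b) : 𝕜) := by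
  have h10 : inner 𝕜 v₁ v₀ = 0 := by rw [← inner_conj_symm, horth, map_zero]
  simp only [inner_add_left, inner_add_right, inner_smul_left, inner_smul_right,
    inner_self_eq_norm_sq_to_K, h₀, h₁, horth, h10, RCLike.conj_ofReal]
  rw [Real.cos_sub]
  push_cast
  ring

theorem stmt1_general {E : Type*} [NormedAddCommGroup E] [InnerProductSpace ℂ E]
    (v₀ v₁ : E) (h₀ : ‖v₀‖ = 1) (h₁ : ‖v₁‖ = 1) (horth : (inner ℂ v₀ v₁ : ℂ) = 0)
    (X : ℕ) (θ : ℝ) (hθ : 0 < θ) (hθ' : θ < π / X)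
    (μ : ℕ → ℝ) (hμ : ∀ x, μ x = ((x : ℝ) - ((X : ℝ) - 1) / 2) * θ)
    (e : ℕ → E)
    (he : ∀ x, e x = (Real.cos (μ x / 2) : ℂ) • v₀ + (Real.sin (μ x / 2) : ℂ) • v₁) :
    ∑ x ∈ Finset.range X, ∑ x' ∈ Finset.range X, ‖(inner ℂ (e x) (e x') : ℂ)‖ ^ 2 =
      ((X : ℝ) ^ 2 + (Real.sin (X * θ / 2) / Real.sin (θ / 2)) ^ 2) / 2 := by
  have hX_one : (1 : ℝ) ≤ X := by
    rcases Nat.eq_zero_or_pos X with rfl | hX_pos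
    · rw [Nat.cast_zero, div_zero] at hθ'
      linarith
    · exact_mod_cast hX_pos
  have hθπ : θ < π := hθ'.trans_le (div_le_self pi_pos.le hX_one)
  have hsin : Real.sin (θ / 2) ≠ 0 := (sin_pos_of_pos_of_lt_pi (by linarith) (by linarith)).ne'
  have overlap : ∀ x x' : ℕ,
      ‖(inner ℂ (e x) (e x') : ℂ)‖ ^ 2 = 1 / 2 + Real.cos (x * θ - x' * θ) / 2 := fun x x' => by
    have h := inner_cos_smul_add_sin_smul (𝕜 := ℂ) h₀ h₁ horth (μ x / 2) (μ x' / 2)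
    simp only [Complex.coe_algebraMap] at h
    rw [he, he, h, Complex.norm_real, Real.norm_eq_abs, sq_abs, cos_sq, hμ, hμ]
    ring_nf
  calc _ = ∑ x ∈ Finset.range X, ∑ x' ∈ Finset.range X,
          (1 / 2 + Real.cos (x * θ - x' * θ) / 2) := by
        simp only [overlap]
    _ = ((X : ℝ) ^ 2 +
          ∑ x ∈ Finset.range X, ∑ x' ∈ Finset.range X, Real.cos (x * θ - x' * θ)) / 2 := by
        simp only [Finset.sum_add_distrib, ← Finset.sum_div, Finset.sum_const, Finset.card_range,
          nsmul_eq_mul]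
        ring
    _ = _ := by
        rw [sum_sum_cos_sub_eq_norm_sum_exp_sq (Finset.range X) (fun k => k * θ),
          norm_sum_range_exp_mul_I hsin, sq_abs]

/-- For the equally spaced family of unit vectors, the sum of pairwise squared overlaps equals
`(X² + (sin(Xθ/2)/sin(θ/2))²)/2`. -/
theorem stmt1 {E : Type*} [NormedAddCommGroup E] [InnerProductSpace ℂ E]
    (v₀ v₁ : E) (h₀ : ‖v₀‖ = 1) (h₁ : ‖v₁‖ = 1) (horth : (inner ℂ v₀ v₁ : ℂ) = 0)
    (X : ℕ) (hX : 2 ≤ X) (θ : ℝ) (hθ : 0 < θ) (hθ' : θ < π / X)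
    (μ : ℕ → ℝ) (hμ : ∀ x, μ x = ((x : ℝ) - ((X : ℝ) - 1) / 2) * θ)
    (e : ℕ → E)
    (he : ∀ x, e x = (Real.cos (μ x / 2) : ℂ) • v₀ + (Real.sin (μ x / 2) : ℂ) • v₁) :
    ∑ x ∈ Finset.range X, ∑ x' ∈ Finset.range X, ‖(inner ℂ (e x) (e x') : ℂ)‖ ^ 2 =
      ((X : ℝ) ^ 2 + (Real.sin (X * θ / 2) / Real.sin (θ / 2)) ^ 2) / 2 :=
  stmt1_general v₀ v₁ h₀ h₁ horth X θ hθ hθ' μ hμ e he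
end

section
/- For θ ∈ (0, π/X), the maximal eigenvalue of Σ_{x=0}^{X−1} Π_x^θ, where Π_x^θ projects onto e_x^θ = cos(μ_x/2)v₀ + sin(μ_x/2)v₁ with μ_x = (x−(X−1)/2)θ, equals (1/2)(X + sin(Xθ/2)/sin(θ/2)). -/
/-!
Write `e_x = c_x v₀ + s_x v₁` with `c_x = cos (μ_x / 2)`, `s_x = sin (μ_x / 2)`. The angles `μ_x`
are symmetric about `0`, so `∑ c_x s_x = ½ ∑ sin μ_x = 0` and the sum of projections collapses to
`α |v₀⟩⟨v₀| + β |v₁⟩⟨v₁|` with `α, β = ½ (X ± ∑ cos μ_x)`; the Dirichlet kernel gives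
`∑ cos μ_x = sin (Xθ/2) / sin (θ/2)`, which is positive for `0 < θ < π / X`. The eigenvalues of
this operator are `α`, `β` and `0`, of which `α` is the largest.
-/

open Matrix Real Finset

section CenteredSums

variable (n : ℕ) (θ : ℝ)

theorem sin_half_mul_sum_range_cos_centered :
    sin (θ / 2) * ∑ x ∈ range n, cos (((x : ℝ) - ((n : ℝ) - 1) / 2) * θ) = sin (n * θ / 2) := by
  convert sin_mul_sum_cos n θ (-(((n : ℝ) - 1) * θ / 2)) using 3 with x
  · ring_nf
  · simp

theorem sin_half_mul_sum_range_sin_centered :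
    sin (θ / 2) * ∑ x ∈ range n, sin (((x : ℝ) - ((n : ℝ) - 1) / 2) * θ) = 0 := by
  convert sin_mul_sum_sin n θ (-(((n : ℝ) - 1) * θ / 2)) using 3 with x
  · ring_nf
  · simp

variable {θ}

theorem sum_range_cos_sq_half_centered (hs : sin (θ / 2) ≠ 0) :
    ∑ x ∈ range n, cos (((x : ℝ) - ((n : ℝ) - 1) / 2) * θ / 2) ^ 2
      = (n + sin (n * θ / 2) / sin (θ / 2)) / 2 := by
  have hcos := eq_div_of_mul_eq hs ((mul_comm _ _).trans (sin_half_mul_sum_range_cos_centered n θ))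
  simp_rw [cos_sq, mul_div_cancel₀ _ (two_ne_zero' ℝ), sum_add_distrib, ← sum_div, hcos]
  simp only [sum_const, card_range, nsmul_eq_mul]
  ring

theorem sum_range_sin_sq_half_centered (hs : sin (θ / 2) ≠ 0) :
    ∑ x ∈ range n, sin (((x : ℝ) - ((n : ℝ) - 1) / 2) * θ / 2) ^ 2
      = (n - sin (n * θ / 2) / sin (θ / 2)) / 2 := by
  simp_rw [sin_sq, sum_sub_distrib, sum_range_cos_sq_half_centered n hs]
  simp only [sum_const, card_range, nsmul_eq_mul]
  ring

theorem sum_range_cos_mul_sin_half_centered (hs : sin (θ / 2) ≠ 0) :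
    ∑ x ∈ range n, cos (((x : ℝ) - ((n : ℝ) - 1) / 2) * θ / 2)
      * sin (((x : ℝ) - ((n : ℝ) - 1) / 2) * θ / 2) = 0 := by
  have hsin := (mul_eq_zero.mp (sin_half_mul_sum_range_sin_centered n θ)).resolve_left hs
  have half_angle (t : ℝ) : cos (t / 2) * sin (t / 2) = sin t / 2 := by
    rw [← mul_div_cancel₀ t (two_ne_zero' ℝ), sin_two_mul]
    ring_nf
  simp_rw [half_angle, ← sum_div, hsin, zero_div]

end CenteredSums

section TwoProjections

variable {n ι : Type*} [Fintype n]

theorem sum_vecMulVec_star_mulVec_of_orthogonal_coeffs (s : Finset ι) (c c' : ι → ℝ)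
    (v₀ v₁ : n → ℂ) (hcc' : ∑ x ∈ s, c x * c' x = 0) (v : n → ℂ) :
    (∑ x ∈ s, vecMulVec ((c x : ℂ) • v₀ + (c' x : ℂ) • v₁)
        (star ((c x : ℂ) • v₀ + (c' x : ℂ) • v₁))) *ᵥ v
      = (((∑ x ∈ s, c x ^ 2 : ℝ) : ℂ) * (star v₀ ⬝ᵥ v)) • v₀
        + (((∑ x ∈ s, c' x ^ 2 : ℝ) : ℂ) * (star v₁ ⬝ᵥ v)) • v₁ := by
  set a := star v₀ ⬝ᵥ v
  set b := star v₁ ⬝ᵥ v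
  have hcc'ℂ : ∑ x ∈ s, (c x * c' x : ℂ) = 0 := by exact_mod_cast hcc'
  have term (x : ι) : vecMulVec ((c x : ℂ) • v₀ + (c' x : ℂ) • v₁)
        (star ((c x : ℂ) • v₀ + (c' x : ℂ) • v₁)) *ᵥ v
      = ((c x ^ 2 : ℂ) * a + (c x * c' x : ℂ) * b) • v₀
        + ((c x * c' x : ℂ) * a + (c' x ^ 2 : ℂ) * b) • v₁ := by
    simp only [vecMulVec_mulVec, op_smul_eq_smul, star_add, star_smul, add_dotProduct,
      smul_dotProduct, Complex.star_def, Complex.conj_ofReal, smul_eq_mul]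
    module
  simp only [sum_mulVec, term, sum_add_distrib, ← sum_smul, ← sum_mul, hcc'ℂ]
  push_cast
  module

variable {A : Matrix n n ℂ} {α β : ℂ} {v₀ v₁ : n → ℂ}

theorem mulVec_eq_smul_of_orthonormal
    (hA : ∀ v, A *ᵥ v = (α * (star v₀ ⬝ᵥ v)) • v₀ + (β * (star v₁ ⬝ᵥ v)) • v₁)
    (h₀ : star v₀ ⬝ᵥ v₀ = 1) (h₁₀ : star v₁ ⬝ᵥ v₀ = 0) : A *ᵥ v₀ = α • v₀ := by
  simp [hA, h₀, h₁₀]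

theorem eigenvalue_eq_of_orthonormal
    (hA : ∀ v, A *ᵥ v = (α * (star v₀ ⬝ᵥ v)) • v₀ + (β * (star v₁ ⬝ᵥ v)) • v₁)
    (h₀ : star v₀ ⬝ᵥ v₀ = 1) (h₁ : star v₁ ⬝ᵥ v₁ = 1) (h₀₁ : star v₀ ⬝ᵥ v₁ = 0)
    {μ : ℂ} {v : n → ℂ} (hv : v ≠ 0) (hev : A *ᵥ v = μ • v) : μ = α ∨ μ = β ∨ μ = 0 := by
  have h₁₀ : star v₁ ⬝ᵥ v₀ = 0 := by rw [star_dotProduct, h₀₁, star_zero]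
  have hv₀ : μ * (star v₀ ⬝ᵥ v) = α * (star v₀ ⬝ᵥ v) := by
    simpa [hA, h₀, h₀₁, dotProduct_add] using congrArg (star v₀ ⬝ᵥ ·) hev.symm
  have hv₁ : μ * (star v₁ ⬝ᵥ v) = β * (star v₁ ⬝ᵥ v) := by
    simpa [hA, h₁, h₁₀, dotProduct_add] using congrArg (star v₁ ⬝ᵥ ·) hev.symm
  by_cases ha : star v₀ ⬝ᵥ v = 0
  · by_cases hb : star v₁ ⬝ᵥ v = 0
    · exact .inr (.inr (by simpa [hA, ha, hb, hv] using hev.symm))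
    · exact .inr (.inl (mul_right_cancel₀ hb hv₁))
  · exact .inl (mul_right_cancel₀ ha hv₀)

end TwoProjections

theorem stmt9_general {d : ℕ} (X : ℕ)
    (θ : ℝ) (hθ : 0 < θ) (hθ' : θ < π / X)
    (v₀ v₁ : Fin d → ℂ) (h₀ : star v₀ ⬝ᵥ v₀ = 1) (h₁ : star v₁ ⬝ᵥ v₁ = 1)
    (h₀₁ : star v₀ ⬝ᵥ v₁ = 0)
    (μ : ℕ → ℝ) (hμ : ∀ x, μ x = ((x : ℝ) - ((X : ℝ) - 1) / 2) * θ)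
    (e : ℕ → Fin d → ℂ)
    (he : ∀ x, e x = (Real.cos (μ x / 2) : ℂ) • v₀ + (Real.sin (μ x / 2) : ℂ) • v₁)
    (S : Matrix (Fin d) (Fin d) ℂ)
    (hS : S = ∑ x ∈ Finset.range X, vecMulVec (e x) (star (e x))) :
    (∃ v : Fin d → ℂ, v ≠ 0 ∧
      S.mulVec v = ((((X : ℝ) + Real.sin (X * θ / 2) / Real.sin (θ / 2)) / 2 : ℝ) : ℂ) • v) ∧
    (∀ μ' : ℝ, (∃ v : Fin d → ℂ, v ≠ 0 ∧ S.mulVec v = (μ' : ℂ) • v) →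
      μ' ≤ ((X : ℝ) + Real.sin (X * θ / 2) / Real.sin (θ / 2)) / 2) := by
  simp only [he, hμ] at hS
  subst hS
  have hX₀ : 0 < X := Nat.pos_of_ne_zero (by rintro rfl; simp at hθ'; linarith)
  have hXθ : X * θ < π := by rwa [lt_div_iff₀ (by positivity), mul_comm] at hθ'
  have hθX : θ ≤ X * θ := le_mul_of_one_le_left hθ.le (Nat.one_le_cast.mpr hX₀)
  have hs : 0 < sin (θ / 2) := sin_pos_of_pos_of_lt_pi (by linarith) (by linarith)
  have hsX : 0 < sin (X * θ / 2) := sin_pos_of_pos_of_lt_pi (by positivity) (by linarith)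
  have hc := div_pos hsX hs
  have hS := sum_vecMulVec_star_mulVec_of_orthogonal_coeffs (v₀ := v₀) (v₁ := v₁) _ _ _
    (sum_range_cos_mul_sin_half_centered X hs.ne')
  simp only [sum_range_cos_sq_half_centered X hs.ne', sum_range_sin_sq_half_centered X hs.ne']
    at hS
  refine ⟨⟨v₀, fun h ↦ by simp [h] at h₀, mulVec_eq_smul_of_orthonormal hS h₀ ?_⟩, ?_⟩
  · rw [star_dotProduct, h₀₁, star_zero]
  rintro μ' ⟨v, hv, hev⟩
  rcases eigenvalue_eq_of_orthonormal hS h₀ h₁ h₀₁ hv hev with h | h | h <;>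
    norm_cast at h <;> linarith

/-- The maximal eigenvalue of the sum of equally spaced rank-one projections is
`(X + sin(Xθ/2)/sin(θ/2))/2`. -/
theorem stmt9 {d : ℕ} (hd : 2 ≤ d) (X : ℕ) (hX : 2 ≤ X)
    (θ : ℝ) (hθ : 0 < θ) (hθ' : θ < π / X)
    (v₀ v₁ : Fin d → ℂ) (h₀ : star v₀ ⬝ᵥ v₀ = 1) (h₁ : star v₁ ⬝ᵥ v₁ = 1)
    (h₀₁ : star v₀ ⬝ᵥ v₁ = 0)
    (μ : ℕ → ℝ) (hμ : ∀ x, μ x = ((x : ℝ) - ((X : ℝ) - 1) / 2) * θ)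
    (e : ℕ → Fin d → ℂ)
    (he : ∀ x, e x = (Real.cos (μ x / 2) : ℂ) • v₀ + (Real.sin (μ x / 2) : ℂ) • v₁)
    (S : Matrix (Fin d) (Fin d) ℂ)
    (hS : S = ∑ x ∈ Finset.range X, vecMulVec (e x) (star (e x))) :
    (∃ v : Fin d → ℂ, v ≠ 0 ∧
      S.mulVec v = ((((X : ℝ) + Real.sin (X * θ / 2) / Real.sin (θ / 2)) / 2 : ℝ) : ℂ) • v) ∧
    (∀ μ' : ℝ, (∃ v : Fin d → ℂ, v ≠ 0 ∧ S.mulVec v = (μ' : ℂ) • v) →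
      μ' ≤ ((X : ℝ) + Real.sin (X * θ / 2) / Real.sin (θ / 2)) / 2) :=
  stmt9_general X θ hθ hθ' v₀ v₁ h₀ h₁ h₀₁ μ hμ e he S hS
end

section
/- Define four 2×2 self-adjoint matrices by F_{+|0} = (1/8)[(1−cos(γ/2))|0⟩⟨0| + sin(γ/2)V + (1+cos(γ/2))|1⟩⟨1|], F_{+|1} = (1/8)[(cos(γ/2)−1)|0⟩⟨0| − sin(γ/2)V + (1+cos(γ/2))|1⟩⟨1|], F_{∅|0} = (1/4)(1−cos(γ/2))|0⟩⟨0|, F_{∅|1} = 0, where V = |0⟩⟨1|+|1⟩⟨0|. Then for every deterministic assignment λ: {0,1} → {+, ∅}, the operator Σ_{x∈{0,1}} F_{λ(x)|x} is positive semidefinite, and Σ over the four deterministic strategies of the traces equals 1. -/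
open scoped ComplexOrder
open Matrix

lemma psd2 (a b : ℝ) :
    (!![((a * a : ℝ) : ℂ), ((a * b : ℝ) : ℂ); ((a * b : ℝ) : ℂ), ((b * b : ℝ) : ℂ)]).PosSemidef := by
  have h := Matrix.posSemidef_conjTranspose_mul_self (!![(a : ℂ), (b : ℂ)] : Matrix (Fin 1) (Fin 2) ℂ)
  have he : (!![(a : ℂ), (b : ℂ)] : Matrix (Fin 1) (Fin 2) ℂ).conjTranspose * !![(a : ℂ), (b : ℂ)]
      = !![((a * a : ℝ) : ℂ), ((a * b : ℝ) : ℂ); ((a * b : ℝ) : ℂ), ((b * b : ℝ) : ℂ)] := by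
    ext i j
    fin_cases i <;> fin_cases j
    all_goals simp [Matrix.mul_apply, Fin.sum_univ_succ, Matrix.conjTranspose_apply]
    all_goals push_cast
    all_goals ring
  rwa [he] at h

/-- The optimal witness operators: for every deterministic strategy the associated operator is
positive semidefinite, and the traces over the four deterministic strategies sum to one.
Here `true` encodes the click outcome `+` and `false` the null outcome `∅`. -/
theorem stmt11 (γ : ℝ) (F : Bool → Fin 2 → Matrix (Fin 2) (Fin 2) ℂ)
    (hplus0 : F true 0 = (1 / 8 : ℂ) •
      !![((1 - Real.cos (γ / 2) : ℝ) : ℂ), ((Real.sin (γ / 2) : ℝ) : ℂ);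
          ((Real.sin (γ / 2) : ℝ) : ℂ), ((1 + Real.cos (γ / 2) : ℝ) : ℂ)])
    (hplus1 : F true 1 = (1 / 8 : ℂ) •
      !![((Real.cos (γ / 2) - 1 : ℝ) : ℂ), ((-Real.sin (γ / 2) : ℝ) : ℂ);
          ((-Real.sin (γ / 2) : ℝ) : ℂ), ((1 + Real.cos (γ / 2) : ℝ) : ℂ)])
    (hnull0 : F false 0 = (1 / 4 : ℂ) •
      !![((1 - Real.cos (γ / 2) : ℝ) : ℂ), 0; 0, 0])
    (hnull1 : F false 1 = 0) :
    (∀ l : Fin 2 → Bool, (F (l 0) 0 + F (l 1) 1).PosSemidef) ∧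
    (∑ l : Fin 2 → Bool, (F (l 0) 0 + F (l 1) 1).trace) = 1 := by
  set s : ℝ := Real.sin (γ / 4) with hs
  set c : ℝ := Real.cos (γ / 4) with hcdef
  have hsc : (s : ℂ) ^ 2 + (c : ℂ) ^ 2 = 1 := by
    exact_mod_cast Real.sin_sq_add_cos_sq (γ / 4)
  have h2 : γ / 2 = 2 * (γ / 4) := by ring
  have hcos : Real.cos (γ / 2) = 2 * c ^ 2 - 1 := by rw [h2, Real.cos_two_mul]
  have hsin : Real.sin (γ / 2) = 2 * s * c := by rw [h2, Real.sin_two_mul]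
  constructor
  · intro l
    have key : ∀ a b : ℝ,
        (!![((a * a : ℝ) : ℂ), ((a * b : ℝ) : ℂ); ((a * b : ℝ) : ℂ), ((b * b : ℝ) : ℂ)]
          + !![((a * a : ℝ) : ℂ), ((a * b : ℝ) : ℂ); ((a * b : ℝ) : ℂ), ((b * b : ℝ) : ℂ)]).PosSemidef :=
      fun a b => (psd2 a b).add (psd2 a b)
    rcases Bool.eq_false_or_eq_true (l 0) with h0 | h0 <;>
      rcases Bool.eq_false_or_eq_true (l 1) with h1 | h1 <;> rw [h0, h1]
    · -- true true
      have hM : F true 0 + F true 1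
          = !![((0 * 0 : ℝ) : ℂ), ((0 * (c / 2) : ℝ) : ℂ);
              ((0 * (c / 2) : ℝ) : ℂ), ((c / 2 * (c / 2) : ℝ) : ℂ)]
          + !![((0 * 0 : ℝ) : ℂ), ((0 * (c / 2) : ℝ) : ℂ);
              ((0 * (c / 2) : ℝ) : ℂ), ((c / 2 * (c / 2) : ℝ) : ℂ)] := by
        rw [hplus0, hplus1]
        ext i j
        fin_cases i <;> fin_cases j
        all_goals simp [hcos, hsin]
        all_goals push_cast
        all_goals first
          | ring1
          | linear_combination (-(1/4) : ℂ) * hsc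
          | linear_combination (-(1/2) : ℂ) * hsc
      rw [hM]; exact key _ _
    · -- true false
      have hM : F true 0 + F false 1
          = !![((s / 2 * (s / 2) : ℝ) : ℂ), ((s / 2 * (c / 2) : ℝ) : ℂ);
              ((s / 2 * (c / 2) : ℝ) : ℂ), ((c / 2 * (c / 2) : ℝ) : ℂ)] := by
        rw [hplus0, hnull1]
        ext i j
        fin_cases i <;> fin_cases j
        all_goals simp [hcos, hsin]
        all_goals push_cast
        all_goals first
          | ring1
          | linear_combination (-(1/4) : ℂ) * hsc
          | linear_combination (-(1/2) : ℂ) * hsc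
      rw [hM]; exact psd2 _ _
    · -- false true
      have hM : F false 0 + F true 1
          = !![((s / 2 * (s / 2) : ℝ) : ℂ), ((s / 2 * (-(c / 2)) : ℝ) : ℂ);
              ((s / 2 * (-(c / 2)) : ℝ) : ℂ), (((-(c / 2)) * (-(c / 2)) : ℝ) : ℂ)] := by
        rw [hnull0, hplus1]
        ext i j
        fin_cases i <;> fin_cases j
        all_goals simp [hcos, hsin]
        all_goals push_cast
        all_goals first
          | ring1
          | linear_combination (-(1/4) : ℂ) * hsc
          | linear_combination (-(1/2) : ℂ) * hsc
      rw [hM]; exact psd2 _ _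
    · -- false false
      have hM : F false 0 + F false 1
          = !![((s / 2 * (s / 2) : ℝ) : ℂ), ((s / 2 * 0 : ℝ) : ℂ);
              ((s / 2 * 0 : ℝ) : ℂ), ((0 * 0 : ℝ) : ℂ)]
          + !![((s / 2 * (s / 2) : ℝ) : ℂ), ((s / 2 * 0 : ℝ) : ℂ);
              ((s / 2 * 0 : ℝ) : ℂ), ((0 * 0 : ℝ) : ℂ)] := by
        rw [hnull0, hnull1]
        ext i j
        fin_cases i <;> fin_cases j
        all_goals simp [hcos, hsin]
        all_goals push_cast
        all_goals first
          | ring1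
          | linear_combination (-(1/4) : ℂ) * hsc
          | linear_combination (-(1/2) : ℂ) * hsc
      rw [hM]; exact key _ _
  · rw [Fintype.sum_equiv (piFinTwoEquiv fun _ => Bool)
      (fun l => (F (l 0) 0 + F (l 1) 1).trace) (fun p => (F p.1 0 + F p.2 1).trace)
      (fun l => rfl), Fintype.sum_prod_type, Fintype.sum_bool, Fintype.sum_bool, Fintype.sum_bool]
    simp [hplus0, hplus1, hnull0, hnull1, Matrix.trace_fin_two]
    push_cast
    ring
end
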